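/- Let 0 ≤ a_1 ≤ b_1 ≤ a_2 ≤ b_2 ≤ ⋯ ≤ a_k ≤ b_k and set A = {Σ_{j=1}^k (L(b_j) − L(a_j)) > 0}, i.e. the event that at least one renewal time S_l falls in ∪_{j=1}^k (a_j, b_j]. If ℙ(A) > 0, then E[(−1)^{Σ_{j=1}^k (T(b_j) − T(a_j))} | A] = 0. -/

import Mathlib

open MeasureTheory ProbabilityTheory Set

/-!
Let `I` be the set of renewal indices `l` with `S_l ∈ ⋃ j, (a j, b j]`. Because the intervals
interlace, `I` is the disjoint union of the integer intervals `(L (a j), L (b j)]`, so the exponent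
is `∑ l ∈ I, η l` and the conditioning event is `I ≠ ∅`. As `I` is a function of the interarrival
times, it is independent of the `η`'s; for each fixed nonempty `I`, the product of the independent
fair signs `(-1) ^ η l`, `l ∈ I`, has mean zero.
-/

lemma Finset.sum_range_succ_tsub_sum_range_succ (x : ℕ → ℕ) (m n : ℕ) :
    ∑ l ∈ range (m + 1), x l - ∑ l ∈ range (n + 1), x l = ∑ l ∈ Ioc n m, x l := by
  rcases le_total n m with h | h
  · rw [← sum_range_add_sum_Ico x (Nat.add_le_add_right h 1), Ico_add_one_add_one_eq_Ioc,
      add_tsub_cancel_left]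
  · rw [Ioc_eq_empty_of_le h, sum_empty,
      tsub_eq_zero_of_le (sum_le_sum_of_subset (range_subset_range.2 (Nat.add_le_add_right h 1)))]

lemma Finset.sum_tsub_pos_iff_biUnion_Ioc_nonempty {ι : Type*} (s : Finset ι) (x y : ι → ℕ) :
    0 < ∑ j ∈ s, (y j - x j) ↔ (s.biUnion fun j => Ioc (x j) (y j)).Nonempty := by
  simp [sum_pos_iff, biUnion_nonempty]

lemma Fin.le_of_lt_of_interlaced {α : Type*} [Preorder α] {k : ℕ} {a b : Fin k → α}
    (hab : ∀ j, a j ≤ b j) (hba : ∀ j : Fin k, ∀ h : (j : ℕ) + 1 < k, b j ≤ a ⟨(j : ℕ) + 1, h⟩)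
    {i j : Fin k} (hij : i < j) : b i ≤ a j := by
  obtain ⟨j, hj⟩ := j
  change (i : ℕ) + 1 ≤ j at hij
  induction j, hij using Nat.le_induction with
  | base => exact hba i hj
  | succ m hm ih => exact (ih (by omega)).trans ((hab _).trans (hba ⟨m, by omega⟩ hj))

lemma measurable_natCard_subtype {α ι : Type*} [MeasurableSpace α] [Countable ι]
    {p : ι → α → Prop} (hp : ∀ i, MeasurableSet {x | p i x}) :
    Measurable fun x => Nat.card {i // p i x} :=
  measurable_ncard.comp (measurable_set_iff.2 fun i => measurableSet_setOfPred.1 (hp i))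

-- `Nat.card` makes this `0` when infinitely many partial sums are `≤ t`.
noncomputable def renewalCount (u : ℕ → ℝ) (t : ℝ) : ℕ :=
  Nat.card {k : ℕ // 1 ≤ k ∧ ∑ i ∈ Finset.range k, u i ≤ t}

lemma measurable_renewalCount (t : ℝ) : Measurable fun u => renewalCount u t :=
  measurable_natCard_subtype fun _ =>
    (MeasurableSet.const _).inter
      (measurableSet_le (Finset.measurable_sum _ fun i _ => measurable_pi_apply i) measurable_const)

lemma renewalCount_le_renewalCount_of_ne_zero {u : ℕ → ℝ} {s t t' : ℝ} (hst : s ≤ t)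
    (htt' : t ≤ t') (h : renewalCount u t' ≠ 0) : renewalCount u s ≤ renewalCount u t := by
  have hfin : {k : ℕ | 1 ≤ k ∧ ∑ i ∈ Finset.range k, u i ≤ t'}.Finite :=
    Set.finite_of_ncard_ne_zero h
  exact Set.ncard_le_ncard (fun k hk => ⟨hk.1, hk.2.trans hst⟩)
    (hfin.subset fun k hk => ⟨hk.1, hk.2.trans htt'⟩)

lemma disjoint_Ioc_renewalCount (u : ℕ → ℝ) {a b c d : ℝ} (hbc : b ≤ c) (hcd : c ≤ d) :
    Disjoint (Finset.Ioc (renewalCount u a) (renewalCount u b))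
      (Finset.Ioc (renewalCount u c) (renewalCount u d)) := by
  rcases eq_or_ne (renewalCount u d) 0 with h | h
  · simp [h]
  · exact Finset.Ioc_disjoint_Ioc_of_le (renewalCount_le_renewalCount_of_ne_zero hbc hcd h)

noncomputable def renewalIndices {k : ℕ} (a b : Fin k → ℝ) (u : ℕ → ℝ) : Finset ℕ :=
  Finset.univ.biUnion fun j => Finset.Ioc (renewalCount u (a j)) (renewalCount u (b j))

lemma measurable_renewalIndices {k : ℕ} (a b : Fin k → ℝ) : Measurable (renewalIndices a b) :=
  Measurable.of_discrete.comp
    (g := fun w : Fin k → ℕ × ℕ => Finset.univ.biUnion fun j => Finset.Ioc (w j).1 (w j).2)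
    (measurable_pi_lambda _ fun _ => (measurable_renewalCount _).prodMk (measurable_renewalCount _))

lemma pairwiseDisjoint_Ioc_renewalCount {k : ℕ} {a b : Fin k → ℝ} (hab : ∀ j, a j ≤ b j)
    (hba : ∀ j : Fin k, ∀ h : (j : ℕ) + 1 < k, b j ≤ a ⟨(j : ℕ) + 1, h⟩) (u : ℕ → ℝ) :
    (↑(Finset.univ : Finset (Fin k)) : Set (Fin k)).PairwiseDisjoint
      fun j => Finset.Ioc (renewalCount u (a j)) (renewalCount u (b j)) :=
  ((pairwise_disjoint_on _).2 fun _ j hij =>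
    disjoint_Ioc_renewalCount u (Fin.le_of_lt_of_interlaced hab hba hij) (hab j)).set_pairwise _

section Parity

variable {Ω : Type*} [MeasurableSpace Ω] {P : Measure Ω} [IsProbabilityMeasure P]

lemma integral_neg_one_pow_eq_zero {g : Ω → ℕ} (hg : Measurable g)
    (h1 : P {ω | g ω = 1} = 1 / 2) (h0 : P {ω | g ω = 0} = 1 / 2) :
    ∫ ω, (-1 : ℝ) ^ g ω ∂P = 0 := by
  have hm0 : MeasurableSet {ω | g ω = 0} := hg (measurableSet_singleton 0)
  have hm1 : MeasurableSet {ω | g ω = 1} := hg (measurableSet_singleton 1)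
  have hdisj : Disjoint {ω | g ω = 0} {ω | g ω = 1} :=
    disjoint_left.2 fun ω h0 h1 => by simp_all
  have hcover : P.restrict ({ω | g ω = 0} ∪ {ω | g ω = 1}) = P := by
    refine Measure.restrict_eq_self_of_ae_mem ((ae_mem_iff_measure_eq ?_).2 ?_)
    · exact (hm0.union hm1).nullMeasurableSet
    · rw [measure_union hdisj hm1, h0, h1, ENNReal.add_halves, measure_univ]
  have hint : Integrable (fun ω => (-1 : ℝ) ^ g ω) P :=
    .of_bound (by fun_prop) 1 (.of_forall fun ω => by simp)
  rw [← hcover, setIntegral_union hdisj hm1 hint.integrableOn hint.integrableOn,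
    setIntegral_congr_fun hm0 (g := fun _ => 1) fun ω (hω : g ω = 0) => by simp [hω],
    setIntegral_congr_fun hm1 (g := fun _ => -1) fun ω (hω : g ω = 1) => by simp [hω],
    setIntegral_const, setIntegral_const, measureReal_def, measureReal_def, h0, h1]
  norm_num

lemma integral_prod_neg_one_pow_eq_zero {ι : Type*} {η : ι → Ω → ℕ}
    (hmeas : ∀ i, Measurable (η i)) (hind : iIndepFun η P)
    (hbern : ∀ i, P {ω | η i ω = 1} = 1 / 2 ∧ P {ω | η i ω = 0} = 1 / 2)
    {F : Finset ι} (hF : F.Nonempty) :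
    ∫ ω, ∏ l ∈ F, (-1 : ℝ) ^ η l ω ∂P = 0 := by
  obtain ⟨l, hl⟩ := hF
  calc ∫ ω, ∏ l ∈ F, (-1 : ℝ) ^ η l ω ∂P = ∫ ω, ∏ i : F, (-1 : ℝ) ^ η i ω ∂P := by
        simp_rw [← Finset.prod_coe_sort F]
    _ = ∏ i : F, ∫ ω, (-1 : ℝ) ^ η i ω ∂P :=
        (hind.precomp Subtype.val_injective).integral_fun_prod_comp
          (f := fun _ n => (-1 : ℝ) ^ n) (fun i => (hmeas i).aemeasurable)
          (fun _ => Measurable.of_discrete.aestronglyMeasurable)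
    _ = 0 := Finset.prod_eq_zero (Finset.mem_univ ⟨l, hl⟩)
        (integral_neg_one_pow_eq_zero (hmeas l) (hbern l).1 (hbern l).2)

lemma setIntegral_prod_neg_one_pow_eq_zero {ι : Type*} [Countable ι] {η : ι → Ω → ℕ}
    (hmeas : ∀ i, Measurable (η i)) (hind : iIndepFun η P)
    (hbern : ∀ i, P {ω | η i ω = 1} = 1 / 2 ∧ P {ω | η i ω = 0} = 1 / 2)
    {J : Ω → Finset ι} (hJ : Measurable J) (hJη : IndepFun J (fun ω i => η i ω) P) :
    ∫ ω in {ω | (J ω).Nonempty}, ∏ l ∈ J ω, (-1 : ℝ) ^ η l ω ∂P = 0 := by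
  have hηvec : Measurable fun ω i => η i ω := measurable_pi_lambda _ hmeas
  have hpiece (F : Finset ι) (hF : F.Nonempty) :
      ∫ ω in J ⁻¹' {F}, ∏ l ∈ J ω, (-1 : ℝ) ^ η l ω ∂P = 0 :=
    calc ∫ ω in J ⁻¹' {F}, ∏ l ∈ J ω, (-1 : ℝ) ^ η l ω ∂P
        = ∫ ω in J ⁻¹' {F}, ∏ l ∈ F, (-1 : ℝ) ^ η l ω ∂P :=
          setIntegral_congr_fun (hJ (measurableSet_singleton F)) fun ω (hω : J ω = F) => by
            rw [hω]
      _ = P.real (J ⁻¹' {F}) * ∫ ω, ∏ l ∈ F, (-1 : ℝ) ^ η l ω ∂P :=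
          ((IndepFun_iff_Indep _ _ _).1 hJη).setIntegral_eq_mul
            (f := fun e => ∏ l ∈ F, (-1 : ℝ) ^ e l) hJ.comap_le hηvec.aemeasurable ⟨{F}, measurableSet_singleton F, rfl⟩
            (Finset.measurable_prod _ fun l _ =>
              Measurable.of_discrete.comp (measurable_pi_apply l)).aestronglyMeasurable
      _ = 0 := by rw [integral_prod_neg_one_pow_eq_zero hmeas hind hbern hF, mul_zero]
  have hunion : {ω | (J ω).Nonempty} = ⋃ F : {F : Finset ι // F.Nonempty}, J ⁻¹' {F.1} := by
    ext ω; simp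
  have hint : Integrable (fun ω => ∏ l ∈ J ω, (-1 : ℝ) ^ η l ω) P :=
    .of_bound (measurable_from_prod_countable_right
        (f := fun p : Finset ι × (ι → ℕ) => ∏ l ∈ p.1, (-1 : ℝ) ^ p.2 l)
        (fun F => Finset.measurable_prod _ fun l _ =>
          Measurable.of_discrete.comp (measurable_pi_apply l)) |>.comp
        (hJ.prodMk hηvec)).aestronglyMeasurable 1 (.of_forall fun ω => by simp [norm_prod])
  rw [hunion, integral_iUnion (fun F => hJ (measurableSet_singleton _))
    (fun F F' hFF' => Disjoint.preimage J (disjoint_singleton.2 (Subtype.val_injective.ne hFF')))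
    hint.integrableOn]
  simp [hpiece _ (Subtype.prop _)]

end Parity

theorem renewal_parity_cond_expectation_zero_general
    {Ω : Type*} [MeasurableSpace Ω] (P : Measure Ω) [IsProbabilityMeasure P]
    (U : ℕ → Ω → ℝ) (η : ℕ → Ω → ℕ)
    (hUmeas : ∀ m, Measurable (U m))
    (hηmeas : ∀ m, Measurable (η m))
    (hηindep : iIndepFun η P)
    (hηbern : ∀ m, P {ω | η m ω = 1} = 1 / 2 ∧ P {ω | η m ω = 0} = 1 / 2)
    (hUη : IndepFun (fun ω (m : ℕ) => U (m + 1) ω) (fun ω (m : ℕ) => η m ω) P)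
    (S : ℕ → Ω → ℝ) (hS : ∀ k ω, S k ω = ∑ i ∈ Finset.range k, U (i + 1) ω)
    (L : ℝ → Ω → ℕ) (hL : ∀ t ω, L t ω = Nat.card {k : ℕ // 1 ≤ k ∧ S k ω ≤ t})
    (T : ℝ → Ω → ℕ) (hT : ∀ t ω, T t ω = ∑ l ∈ Finset.range (L t ω + 1), η l ω)
    (k : ℕ) (a b : Fin k → ℝ)
    (hab : ∀ j, a j ≤ b j)
    (hba : ∀ j : Fin k, ∀ h : (j : ℕ) + 1 < k, b j ≤ a ⟨(j : ℕ) + 1, h⟩) :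
    ∫ ω, (-1 : ℝ) ^ (∑ j, (T (b j) ω - T (a j) ω))
        ∂(P[|{ω | 0 < ∑ j, (L (b j) ω - L (a j) ω)}]) = 0 := by
  set V : Ω → ℕ → ℝ := fun ω m => U (m + 1) ω
  have hLV (t : ℝ) (ω : Ω) : L t ω = renewalCount (V ω) t := by simp only [hL, hS]; rfl
  have hA : {ω | 0 < ∑ j, (L (b j) ω - L (a j) ω)} =
      {ω | (renewalIndices a b (V ω)).Nonempty} := by
    ext ω
    simp only [mem_ofPred_eq, hLV]
    exact Finset.sum_tsub_pos_iff_biUnion_Ioc_nonempty _ _ _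
  have hparity (ω : Ω) : (-1 : ℝ) ^ (∑ j, (T (b j) ω - T (a j) ω)) =
      ∏ l ∈ renewalIndices a b (V ω), (-1 : ℝ) ^ η l ω := by
    rw [Finset.prod_pow_eq_pow_sum, renewalIndices,
      Finset.sum_biUnion (pairwiseDisjoint_Ioc_renewalCount hab hba _)]
    simp only [hT, hLV, Finset.sum_range_succ_tsub_sum_range_succ]
  have hmeas : Measurable fun ω => renewalIndices a b (V ω) :=
    (measurable_renewalIndices a b).comp (measurable_pi_lambda _ fun m => hUmeas (m + 1))
  rw [hA, ProbabilityTheory.cond, integral_smul_measure]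
  simp_rw [hparity]
  rw [setIntegral_prod_neg_one_pow_eq_zero hηmeas hηindep hηbern hmeas
    (hUη.comp (measurable_renewalIndices a b) measurable_id), smul_zero]

/-- For the renewal reward process `T(t) = Σ_{l=0}^{L(t)} η_l`: if
`0 ≤ a₁ ≤ b₁ ≤ a₂ ≤ ⋯ ≤ a_k ≤ b_k` and `A = {Σ_j (L(b_j) - L(a_j)) > 0}` (at least one
renewal time lies in `∪_j (a_j, b_j]`) has positive probability, then
`E[(-1)^{Σ_j (T(b_j) - T(a_j))} | A] = 0`. -/
theorem renewal_parity_cond_expectation_zero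
    {Ω : Type*} [MeasurableSpace Ω] (P : Measure Ω) [IsProbabilityMeasure P]
    (U : ℕ → Ω → ℝ) (η : ℕ → Ω → ℕ)
    (hUmeas : ∀ m, Measurable (U m))
    (hUnonneg : ∀ m ω, 0 ≤ U m ω)
    (hUindep : iIndepFun (fun m => U (m + 1)) P)
    (hUident : ∀ m, IdentDistrib (U (m + 1)) (U 1) P P)
    (hU0 : P {ω | U 1 ω = 0} < 1)
    (hηmeas : ∀ m, Measurable (η m))
    (hηindep : iIndepFun η P)
    (hηbern : ∀ m, P {ω | η m ω = 1} = 1 / 2 ∧ P {ω | η m ω = 0} = 1 / 2)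
    (hUη : IndepFun (fun ω (m : ℕ) => U (m + 1) ω) (fun ω (m : ℕ) => η m ω) P)
    (S : ℕ → Ω → ℝ) (hS : ∀ k ω, S k ω = ∑ i ∈ Finset.range k, U (i + 1) ω)
    (L : ℝ → Ω → ℕ) (hL : ∀ t ω, L t ω = Nat.card {k : ℕ // 1 ≤ k ∧ S k ω ≤ t})
    (T : ℝ → Ω → ℕ) (hT : ∀ t ω, T t ω = ∑ l ∈ Finset.range (L t ω + 1), η l ω)
    (k : ℕ) (a b : Fin k → ℝ)
    (ha0 : ∀ j, 0 ≤ a j)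
    (hab : ∀ j, a j ≤ b j)
    (hba : ∀ j : Fin k, ∀ h : (j : ℕ) + 1 < k, b j ≤ a ⟨(j : ℕ) + 1, h⟩)
    (hA : 0 < P {ω | 0 < ∑ j, (L (b j) ω - L (a j) ω)}) :
    ∫ ω, (-1 : ℝ) ^ (∑ j, (T (b j) ω - T (a j) ω))
        ∂(P[|{ω | 0 < ∑ j, (L (b j) ω - L (a j) ω)}]) = 0 :=
  renewal_parity_cond_expectation_zero_general P U η hUmeas hηmeas hηindep hηbern hUη S hS L hL T hT
    k a b hab hba
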